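/- arXiv:1007.2932 — 5 statements merged into one kernel-verified Lean document; each statement's English description precedes it below -/
import Mathlib

section
/- Let n ≥ 2 and let β = σ_{i_1} σ_{i_2} ⋯ σ_{i_{n−1}} be a positive word of length n−1 in B_n such that β^n = Δ_n². Then the index sequence (i_1, …, i_{n−1}) is a permutation of (1, …, n−1); that is, each generator σ_1, …, σ_{n−1} occurs exactly once in the word. -/
/-- The braid relations on `m` generators (for the braid group `B_{m+1}`). -/
def braidRels (m : ℕ) : Set (FreeGroup (Fin m)) :=
  { r | (∃ i j : Fin m, (i : ℕ) + 2 ≤ (j : ℕ) ∧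
      r = FreeGroup.of i * FreeGroup.of j * (FreeGroup.of i)⁻¹ * (FreeGroup.of j)⁻¹) ∨
    (∃ i j : Fin m, (j : ℕ) = (i : ℕ) + 1 ∧
      r = FreeGroup.of i * FreeGroup.of j * FreeGroup.of i *
          (FreeGroup.of j * FreeGroup.of i * FreeGroup.of j)⁻¹) }

/-- The braid group `B_n`, presented on `n - 1` generators. -/
abbrev BraidGroup (n : ℕ) := PresentedGroup (braidRels (n - 1))

/-- The generator `σ_i` of `B_n`, for `1 ≤ i ≤ n - 1` (and the identity otherwise). -/
def braidGen (n i : ℕ) : BraidGroup n :=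
  if h : 1 ≤ i ∧ i ≤ n - 1 then PresentedGroup.of (⟨i - 1, by omega⟩ : Fin (n - 1)) else 1

/-- The product `σ_{i_1} σ_{i_2} ⋯ σ_{i_ℓ}` associated to a list of indices. -/
def wordProd (n : ℕ) (l : List ℕ) : BraidGroup n := (l.map (braidGen n)).prod

/-- A positive braid: a product of generators `σ_i`, `1 ≤ i ≤ n-1` (no inverses). -/
def IsPositiveBraid (n : ℕ) (β : BraidGroup n) : Prop :=
  ∃ l : List ℕ, (∀ i ∈ l, 1 ≤ i ∧ i ≤ n - 1) ∧ β = wordProd n l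

/-- The half twist `Δ_n = (σ_1)(σ_2 σ_1)(σ_3 σ_2 σ_1) ⋯ (σ_{n-1} ⋯ σ_1)`. -/
def halfTwist (n : ℕ) : BraidGroup n :=
  wordProd n (((List.range (n - 1)).map (fun k => (List.range (k + 1)).reverse.map (· + 1))).flatten)

/-- The standard root `δ_n = σ_1 σ_2 ⋯ σ_{n-1}`. -/
def stdRoot (n : ℕ) : BraidGroup n := wordProd n ((List.range (n - 1)).map (· + 1))

/-- The reversed root `δ̄_n = σ_{n-1} σ_{n-2} ⋯ σ_1`. -/
def stdRootBar (n : ℕ) : BraidGroup n := wordProd n (((List.range (n - 1)).map (· + 1)).reverse)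

/-- The descending chain `b, b-1, …, a+1` (of length `b - a`). -/
def chainDesc (a b : ℕ) : List ℕ := (List.range (b - a)).map (fun t => b - t)

/-- The normal-form index sequence of a subset `S = {j_1 < ⋯ < j_r} ⊆ {1, …, n-2}`:
the concatenation of the decreasing chains
`j_1, …, 1; j_2, …, j_1 + 1; …; n-1, …, j_r + 1`. -/
def normalWord (n : ℕ) (S : Finset ℕ) : List ℕ :=
  let bs : List ℕ := (0 :: S.sort (· ≤ ·)) ++ [n - 1]
  ((bs.zip bs.tail).map (fun p => chainDesc p.1 p.2)).flatten

/-- The normal-form braid of a subset `S ⊆ {1, …, n-2}`. -/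
def normalBraid (n : ℕ) (S : Finset ℕ) : BraidGroup n := wordProd n (normalWord n S)

/-!
Map `B_n` to the group of permutations of the strands decorated with, for each ordered pair of
strands, the number of crossings between them. If `σ_j` does not occur in a word, its image
never moves a strand across the cut between positions `j` and `j + 1` and records no crossing
between the strands on the two sides, and such elements form a subgroup. On the other hand,
every positive word containing `σ_j` records a positive number of crossings across that cut.
So `β ^ n = Δ_n²` forces every letter of `Δ_n²`, that is every `σ_j`, to occur in `β`, and a
word of length `n - 1` containing all of `σ_1, …, σ_{n-1}` is a permutation of them.
-/

/-- `count a b` is the number of crossings at which the strand starting at `a` passes from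
immediately left of the strand starting at `b` to its right; `perm` sends each final position
to the starting position of the strand ending there. -/
@[ext]
structure CrossingData (α : Type*) where
  count : α → α → ℤ
  perm : Equiv.Perm α

namespace CrossingData

variable {α : Type*}

instance : Mul (CrossingData α) :=
  ⟨fun x y => ⟨fun a b => x.count a b + y.count (x.perm⁻¹ a) (x.perm⁻¹ b), x.perm * y.perm⟩⟩

instance : One (CrossingData α) := ⟨⟨fun _ _ => 0, 1⟩⟩

instance : Inv (CrossingData α) :=
  ⟨fun x => ⟨fun a b => -x.count (x.perm a) (x.perm b), x.perm⁻¹⟩⟩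

@[simp] lemma mul_count (x y : CrossingData α) (a b : α) :
    (x * y).count a b = x.count a b + y.count (x.perm⁻¹ a) (x.perm⁻¹ b) := rfl
@[simp] lemma mul_perm (x y : CrossingData α) : (x * y).perm = x.perm * y.perm := rfl
@[simp] lemma one_count (a b : α) : (1 : CrossingData α).count a b = 0 := rfl
@[simp] lemma one_perm : (1 : CrossingData α).perm = 1 := rfl
@[simp] lemma inv_count (x : CrossingData α) (a b : α) :
    x⁻¹.count a b = -x.count (x.perm a) (x.perm b) := rfl
@[simp] lemma inv_perm (x : CrossingData α) : x⁻¹.perm = x.perm⁻¹ := rfl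

instance : Group (CrossingData α) :=
  Group.ofLeftAxioms
    (fun x y z => by ext <;> simp [add_assoc, mul_assoc])
    (fun x => by ext <;> simp)
    (fun x => by ext <;> simp)

def separating (s : Set α) : Subgroup (CrossingData α) where
  carrier := {x | (∀ a, x.perm a ∈ s ↔ a ∈ s) ∧ ∀ a ∈ s, ∀ b ∉ s, x.count a b = 0}
  one_mem' := ⟨fun _ => Iff.rfl, fun _ _ _ _ => rfl⟩
  mul_mem' := by
    rintro x y ⟨hx, hx'⟩ ⟨hy, hy'⟩
    have hxinv : ∀ a, x.perm⁻¹ a ∈ s ↔ a ∈ s := fun a => by simpa using (hx (x.perm⁻¹ a)).symm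
    refine ⟨fun a => (hx _).trans (hy a), fun a ha b hb => ?_⟩
    rw [mul_count, hx' a ha b hb, hy' _ ((hxinv a).2 ha) _ (mt (hxinv b).1 hb), add_zero]
  inv_mem' := by
    rintro x ⟨hx, hx'⟩
    refine ⟨fun a => by simpa using ((hx (x.perm⁻¹ a)).symm), fun a ha b hb => ?_⟩
    rw [inv_count, hx' _ ((hx a).2 ha) _ (mt (hx b).1 hb), neg_zero]

def nonneg (α : Type*) : Submonoid (CrossingData α) where
  carrier := {x | ∀ a b, 0 ≤ x.count a b}
  one_mem' _ _ := le_rfl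
  mul_mem' hx hy a b := add_nonneg (hx a b) (hy _ _)

def Crosses (s : Set α) (x : CrossingData α) : Prop :=
  ∃ a ∈ s, ∃ b ∉ s, 0 < x.count a b

variable {s : Set α} {x y : CrossingData α}

lemma not_crosses_of_mem_separating (hx : x ∈ separating s) : ¬ Crosses s x := by
  rintro ⟨a, ha, b, hb, hab⟩
  exact hab.ne' (hx.2 a ha b hb)

lemma Crosses.mul_left (hx : x ∈ separating s) (hy : Crosses s y) : Crosses s (x * y) := by
  obtain ⟨a, ha, b, hb, hab⟩ := hy
  refine ⟨x.perm a, (hx.1 a).2 ha, x.perm b, mt (hx.1 b).1 hb, ?_⟩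
  simpa [hx.2 _ ((hx.1 a).2 ha) _ (mt (hx.1 b).1 hb)] using hab

lemma Crosses.mul_right (hx : Crosses s x) (hy : y ∈ nonneg α) : Crosses s (x * y) := by
  obtain ⟨a, ha, b, hb, hab⟩ := hx
  exact ⟨a, ha, b, hb, by rw [mul_count]; linarith [hy (x.perm⁻¹ a) (x.perm⁻¹ b)]⟩

section Cross

variable [DecidableEq α]

def cross (p q : α) : CrossingData α where
  count a b := if a = p ∧ b = q then 1 else 0
  perm := Equiv.swap p q

@[simp] lemma cross_count (p q a b : α) :
    (cross p q).count a b = if a = p ∧ b = q then 1 else 0 := rfl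
@[simp] lemma cross_perm (p q : α) : (cross p q).perm = Equiv.swap p q := rfl

lemma mul_cross_count (x : CrossingData α) (p q a b : α) :
    (x * cross p q).count a b = x.count a b + if a = x.perm p ∧ b = x.perm q then 1 else 0 := by
  simp only [mul_count, cross_count, Equiv.Perm.inv_eq_iff_eq]

lemma cross_mul_cross_comm {p q r t : α} (h : [p, q, r, t].Nodup) :
    cross p q * cross r t = cross r t * cross p q := by
  refine CrossingData.ext ?_ ?_
  · have hr : Equiv.swap p q r = r := Equiv.swap_apply_of_ne_of_ne (by grind) (by grind)
    have ht : Equiv.swap p q t = t := Equiv.swap_apply_of_ne_of_ne (by grind) (by grind)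
    have hp : Equiv.swap r t p = p := Equiv.swap_apply_of_ne_of_ne (by grind) (by grind)
    have hq : Equiv.swap r t q = q := Equiv.swap_apply_of_ne_of_ne (by grind) (by grind)
    ext a b
    simp only [mul_cross_count, cross_count, cross_perm, hr, ht, hp, hq]
    exact add_comm _ _
  · simpa using (Equiv.Perm.disjoint_swap_swap h).commute.eq

lemma cross_braid {p q r : α} (hpq : p ≠ q) (hpr : p ≠ r) (hqr : q ≠ r) :
    cross p q * cross q r * cross p q = cross q r * cross p q * cross q r := by
  refine CrossingData.ext ?_ ?_
  · have hrpq : Equiv.swap p q r = r := Equiv.swap_apply_of_ne_of_ne hpr.symm hqr.symm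
    have hpqr : Equiv.swap q r p = p := Equiv.swap_apply_of_ne_of_ne hpq hpr
    ext a b
    simp only [mul_cross_count, cross_count, mul_perm, cross_perm, Equiv.Perm.mul_apply,
      Equiv.swap_apply_left, Equiv.swap_apply_right, hrpq, hpqr]
    ring
  · ext x
    simp only [mul_perm, cross_perm, Equiv.Perm.mul_apply, Equiv.swap_apply_def]
    split_ifs <;> simp_all

lemma cross_mem_nonneg (p q : α) : cross p q ∈ nonneg α := fun _ _ => by
  rw [cross_count]
  split_ifs <;> norm_num

lemma cross_mem_separating {p q : α} (h : p ∈ s ↔ q ∈ s) : cross p q ∈ separating s := by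
  refine ⟨fun a => ?_, fun a ha b hb => ?_⟩
  · rw [cross_perm, Equiv.swap_apply_def]
    split_ifs <;> simp_all
  · rw [cross_count, if_neg]
    rintro ⟨rfl, rfl⟩
    exact hb (h.1 ha)

lemma crosses_cross {p q : α} (hp : p ∈ s) (hq : q ∉ s) : Crosses s (cross p q) :=
  ⟨p, hp, q, hq, by simp⟩

end Cross

end CrossingData

open CrossingData

/-- The image of `σ_{i+1}`: positions are numbered from `0`, so `σ_{i+1}` crosses the strands at
positions `i` and `i + 1`. -/
def braidCrossing (n : ℕ) (i : Fin (n - 1)) : CrossingData (Fin n) :=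
  cross ⟨i, by omega⟩ ⟨i + 1, by omega⟩

lemma braidCrossing_braidRels (n : ℕ) :
    ∀ r ∈ braidRels (n - 1), FreeGroup.lift (braidCrossing n) r = 1 := by
  rintro r (⟨i, j, hij, rfl⟩ | ⟨i, j, hij, rfl⟩)
  · simp only [map_mul, map_inv, FreeGroup.lift_apply_of]
    rw [braidCrossing, braidCrossing, cross_mul_cross_comm, mul_inv_cancel_right, mul_inv_cancel]
    simp only [List.nodup_cons, List.mem_cons, List.not_mem_nil, List.nodup_nil, or_false,
      not_false_eq_true, and_true, Fin.ext_iff]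
    omega
  · simp only [map_mul, map_inv, FreeGroup.lift_apply_of]
    have hj : (⟨j, by omega⟩ : Fin n) = ⟨i + 1, by omega⟩ := Fin.ext hij
    rw [braidCrossing, braidCrossing, hj, cross_braid, mul_inv_cancel] <;>
      simp only [ne_eq, Fin.ext_iff] <;> omega

def braidHom (n : ℕ) : BraidGroup n →* CrossingData (Fin n) :=
  PresentedGroup.toGroup (braidCrossing_braidRels n)

def strandsBelow (n j : ℕ) : Set (Fin n) := {a | (a : ℕ) < j}

lemma braidHom_braidGen_of_le {n i : ℕ} (h1 : 1 ≤ i) (h2 : i ≤ n - 1) :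
    braidHom n (braidGen n i) = cross ⟨i - 1, by omega⟩ ⟨i, by omega⟩ := by
  rw [braidGen, dif_pos ⟨h1, h2⟩, braidHom, PresentedGroup.toGroup.of, braidCrossing]
  congr 2
  exact Nat.sub_add_cancel h1

lemma braidHom_braidGen_mem_nonneg (n i : ℕ) : braidHom n (braidGen n i) ∈ nonneg (Fin n) := by
  by_cases h : 1 ≤ i ∧ i ≤ n - 1
  · rw [braidHom_braidGen_of_le h.1 h.2]
    exact cross_mem_nonneg _ _
  · rw [braidGen, dif_neg h, map_one]
    exact one_mem _

lemma braidHom_braidGen_mem_separating {n i j : ℕ} (hij : i ≠ j) :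
    braidHom n (braidGen n i) ∈ separating (strandsBelow n j) := by
  by_cases h : 1 ≤ i ∧ i ≤ n - 1
  · rw [braidHom_braidGen_of_le h.1 h.2]
    exact cross_mem_separating (by simp only [strandsBelow, Set.mem_ofPred_eq]; omega)
  · rw [braidGen, dif_neg h, map_one]
    exact one_mem _

lemma crosses_braidHom_braidGen {n j : ℕ} (h1 : 1 ≤ j) (h2 : j ≤ n - 1) :
    Crosses (strandsBelow n j) (braidHom n (braidGen n j)) := by
  rw [braidHom_braidGen_of_le h1 h2]
  exact crosses_cross (by simp only [strandsBelow, Set.mem_ofPred_eq]; omega)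
    (by simp [strandsBelow])

lemma wordProd_cons (n i : ℕ) (w : List ℕ) :
    wordProd n (i :: w) = braidGen n i * wordProd n w := by
  simp [wordProd]

lemma wordProd_append (n : ℕ) (u v : List ℕ) :
    wordProd n (u ++ v) = wordProd n u * wordProd n v := by
  simp [wordProd]

lemma wordProd_flatten_replicate (n k : ℕ) (w : List ℕ) :
    wordProd n (List.replicate k w).flatten = wordProd n w ^ k := by
  simp [wordProd, List.map_flatten, List.prod_flatten, List.map_replicate, List.prod_replicate]

lemma braidHom_wordProd_mem_nonneg (n : ℕ) (w : List ℕ) :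
    braidHom n (wordProd n w) ∈ nonneg (Fin n) := by
  rw [wordProd, map_list_prod, List.map_map]
  exact Submonoid.list_prod_mem _ (by simpa using fun i _ => braidHom_braidGen_mem_nonneg n i)

lemma braidHom_wordProd_mem_separating {n j : ℕ} {w : List ℕ} (hj : j ∉ w) :
    braidHom n (wordProd n w) ∈ separating (strandsBelow n j) := by
  rw [wordProd, map_list_prod, List.map_map]
  exact Subgroup.list_prod_mem _ (by
    simpa using fun i hi => braidHom_braidGen_mem_separating (ne_of_mem_of_not_mem hi hj))

lemma crosses_braidHom_wordProd {n j : ℕ} (h1 : 1 ≤ j) (h2 : j ≤ n - 1) {w : List ℕ}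
    (hj : j ∈ w) : Crosses (strandsBelow n j) (braidHom n (wordProd n w)) := by
  induction w with
  | nil => simp at hj
  | cons i w ih =>
    rw [wordProd_cons, map_mul]
    by_cases hij : i = j
    · subst hij
      exact (crosses_braidHom_braidGen h1 h2).mul_right (braidHom_wordProd_mem_nonneg n w)
    · exact (ih (by simpa [Ne.symm hij] using hj)).mul_left
        (braidHom_braidGen_mem_separating hij)

theorem mem_of_wordProd_eq {n j : ℕ} (h1 : 1 ≤ j) (h2 : j ≤ n - 1) {u v : List ℕ}
    (h : wordProd n u = wordProd n v) (hv : j ∈ v) : j ∈ u := by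
  by_contra hu
  have hcross := crosses_braidHom_wordProd h1 h2 hv
  rw [← h] at hcross
  exact not_crosses_of_mem_separating (braidHom_wordProd_mem_separating hu) hcross

def halfTwistWord (n : ℕ) : List ℕ :=
  ((List.range (n - 1)).map (fun k => (List.range (k + 1)).reverse.map (· + 1))).flatten

lemma halfTwist_eq_wordProd (n : ℕ) : halfTwist n = wordProd n (halfTwistWord n) := rfl

lemma mem_halfTwistWord {n j : ℕ} (h1 : 1 ≤ j) (h2 : j ≤ n - 1) : j ∈ halfTwistWord n := by
  simp only [halfTwistWord, List.mem_flatten, List.mem_map, List.mem_range]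
  refine ⟨_, ⟨j - 1, by omega, rfl⟩, List.mem_map.2 ⟨j - 1, ?_, by omega⟩⟩
  exact List.mem_reverse.2 (List.mem_range.2 (by omega))

theorem positive_root_word_is_permutation_general (n : ℕ) (l : List ℕ)
    (hlen : l.length = n - 1)
    (hroot : (wordProd n l) ^ n = (halfTwist n) ^ 2) :
    l.Perm ((List.range (n - 1)).map (· + 1)) := by
  have hsub : (List.range (n - 1)).map (· + 1) ⊆ l := by
    intro j hj
    obtain ⟨k, hk, rfl⟩ := List.mem_map.1 hj
    rw [List.mem_range] at hk
    have hword : wordProd n (List.replicate n l).flatten =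
        wordProd n (halfTwistWord n ++ halfTwistWord n) := by
      rw [wordProd_flatten_replicate, hroot, pow_two, halfTwist_eq_wordProd, wordProd_append]
    have hmem := mem_of_wordProd_eq (j := k + 1) (by omega) (by omega) hword
      (List.mem_append_left _ (mem_halfTwistWord (by omega) (by omega)))
    obtain ⟨w, hw, hkw⟩ := List.mem_flatten.1 hmem
    exact List.eq_of_mem_replicate hw ▸ hkw
  have hnodup : ((List.range (n - 1)).map (· + 1)).Nodup :=
    List.nodup_range.map (add_left_injective 1)
  exact ((List.subperm_of_subset hnodup hsub).perm_of_length_le (by simp [hlen])).symm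

/-- If `β = σ_{i_1} ⋯ σ_{i_{n-1}}` is a positive word of length `n - 1` in
`B_n` (`n ≥ 2`) with `β ^ n = Δ_n²`, then `(i_1, …, i_{n-1})` is a permutation of
`(1, …, n-1)`. -/
theorem positive_root_word_is_permutation (n : ℕ) (hn : 2 ≤ n) (l : List ℕ)
    (hl : ∀ i ∈ l, 1 ≤ i ∧ i ≤ n - 1) (hlen : l.length = n - 1)
    (hroot : (wordProd n l) ^ n = (halfTwist n) ^ 2) :
    l.Perm ((List.range (n - 1)).map (· + 1)) :=
  positive_root_word_is_permutation_general n l hlen hroot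
end

section
/- For every integer n ≥ 2 and every sequence (i_1, …, i_{n−1}) that is a permutation of (1, …, n−1), the braid β = σ_{i_1} σ_{i_2} ⋯ σ_{i_{n−1}} is conjugate in B_n to the standard root δ_n = σ_1 σ_2 ⋯ σ_{n−1}. -/
/-! In a group, let `g 1, …, g m` be elements with `g i` and `g j` commuting whenever
`|i - j| ≥ 2`. Swapping two adjacent commuting letters of a word does not change its product,
and moving a letter that commutes with everything before it to the end of the word conjugates
the product. Every arrangement of `1, …, m` is sorted by such moves, by induction on `m`: the
letter `m + 1` commutes with all letters except `m`, so it can be carried to the end (past the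
letters after it if `m` precedes it, by a rotation otherwise), and the moves sorting the
remaining letters still work with `m + 1` appended. -/

open Relation

namespace CoxeterWord

def Distant (x y : ℕ) : Prop := x + 1 ≠ y ∧ y + 1 ≠ x

-- `swap` leaves the product of the generators unchanged, `rotate` conjugates it by `g s`.
inductive Move : List ℕ → List ℕ → Prop
  | swap (a b : List ℕ) {x y : ℕ} : Distant x y → Move (a ++ x :: y :: b) (a ++ y :: x :: b)
  | rotate (a b : List ℕ) {s : ℕ} : (∀ t ∈ a, Distant s t) → Move (a ++ s :: b) (a ++ b ++ [s])

theorem Move.pass_right {s : ℕ} {c : List ℕ} (hc : ∀ t ∈ c, Distant s t) (a d : List ℕ) :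
    ReflTransGen Move (a ++ s :: (c ++ d)) (a ++ c ++ s :: d) := by
  induction c generalizing a with
  | nil => simpa using ReflTransGen.refl
  | cons x c ih =>
    have hswap := Move.swap a (c ++ d) (hc x List.mem_cons_self)
    have hrest := ih (fun t ht => hc t (List.mem_cons_of_mem x ht)) (a ++ [x])
    simp only [List.append_assoc, List.cons_append, List.nil_append] at hrest ⊢
    exact ReflTransGen.head hswap hrest

theorem Move.perm {u v : List ℕ} (h : Move u v) : u.Perm v := by
  cases h with
  | swap a b _ => exact (List.Perm.swap _ _ b).append_left a
  | rotate a b _ => exact List.perm_middle.trans (List.perm_append_singleton _ _).symm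

theorem perm_of_reflTransGen_move {u v : List ℕ} (h : ReflTransGen Move u v) : u.Perm v :=
  reflTransGen_le_of_equivalence_of_le (List.Perm.eqv ℕ) (fun _ _ => Move.perm) _ _ h

theorem distant_succ_of_mem_range' {m t : ℕ} (ht : t ∈ List.range' 1 m) (htm : t ≠ m) :
    Distant (m + 1) t := by
  have := List.mem_range'_1.1 ht
  unfold Distant
  omega

-- Appending `m + 1` only breaks a rotation of `m`; rotating `m + 1` afterwards repairs it.
theorem Move.append_succ {m : ℕ} {u v : List ℕ} (hu : u.Perm (List.range' 1 m)) (h : Move u v) :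
    ReflTransGen Move (u ++ [m + 1]) (v ++ [m + 1]) := by
  cases h with
  | swap a b hxy => simpa using ReflTransGen.single (Move.swap a (b ++ [m + 1]) hxy)
  | @rotate a b s ha =>
    have hrot : Move (a ++ s :: b ++ [m + 1]) (a ++ b ++ (m + 1) :: [s]) := by
      simpa using Move.rotate a (b ++ [m + 1]) ha
    have hu' : (s :: (a ++ b)).Perm (List.range' 1 m) := List.perm_middle.symm.trans hu
    have hs : s ∈ List.range' 1 m := hu'.mem_iff.1 List.mem_cons_self
    refine ReflTransGen.head hrot (ReflTransGen.single ?_)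
    by_cases hsm : s = m
    · subst hsm
      have hsab : s ∉ a ++ b := (List.nodup_cons.1 (hu'.nodup_iff.2 (List.nodup_range' 1))).1
      simpa using Move.rotate (a ++ b) [s] fun t ht =>
        distant_succ_of_mem_range' (hu'.mem_iff.1 (List.mem_cons_of_mem s ht))
          (ne_of_mem_of_not_mem ht hsab)
    · simpa using Move.swap (a ++ b) [] (distant_succ_of_mem_range' hs hsm)

theorem reflTransGen_move_append_succ {m : ℕ} {u v : List ℕ} (hu : u.Perm (List.range' 1 m))
    (h : ReflTransGen Move u v) : ReflTransGen Move (u ++ [m + 1]) (v ++ [m + 1]) := by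
  induction h with
  | refl => exact ReflTransGen.refl
  | tail huw hmove ih =>
    exact ih.trans (hmove.append_succ ((perm_of_reflTransGen_move huw).symm.trans hu))

theorem reflTransGen_move_range' {m : ℕ} {u : List ℕ} (hu : u.Perm (List.range' 1 m)) :
    ReflTransGen Move u (List.range' 1 m) := by
  induction m generalizing u with
  | zero => simpa [hu.eq_nil] using ReflTransGen.refl
  | succ m ih =>
    have hrange : List.range' 1 (m + 1) = List.range' 1 m ++ [m + 1] := by
      simp [List.range'_concat, add_comm]
    have hsplit : u.Perm ((m + 1) :: List.range' 1 m) :=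
      hu.trans (hrange ▸ List.perm_append_singleton _ _)
    obtain ⟨a, b, rfl⟩ := List.append_of_mem (hsplit.mem_iff.2 List.mem_cons_self)
    have hab : (a ++ b).Perm (List.range' 1 m) :=
      (List.perm_cons _).1 (List.perm_middle.symm.trans hsplit)
    have hnd : (a ++ b).Nodup := hab.nodup_iff.2 (List.nodup_range' 1)
    have hfar : ∀ t ∈ a ++ b, t ≠ m → Distant (m + 1) t := fun t ht =>
      distant_succ_of_mem_range' (hab.mem_iff.1 ht)
    have hgather : ReflTransGen Move (a ++ (m + 1) :: b) (a ++ b ++ [m + 1]) := by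
      by_cases hma : m ∈ a
      · have hmb : m ∉ b := List.disjoint_of_nodup_append hnd hma
        simpa using Move.pass_right (fun t ht =>
          hfar t (List.mem_append_right a ht) (ne_of_mem_of_not_mem ht hmb)) a []
      · exact ReflTransGen.single <| Move.rotate a b fun t ht =>
          hfar t (List.mem_append_left b ht) (ne_of_mem_of_not_mem ht hma)
    rw [hrange]
    exact hgather.trans (reflTransGen_move_append_succ hab (ih hab))

section Conjugacy

variable {G : Type*} [Group G] {g : ℕ → G}

theorem Move.isConj_prod (hg : ∀ x y, Distant x y → Commute (g x) (g y)) {u v : List ℕ}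
    (h : Move u v) : IsConj (u.map g).prod (v.map g).prod := by
  cases h with
  | swap a b hxy =>
    simp only [List.map_append, List.map_cons, List.prod_append, List.prod_cons,
      (hg _ _ hxy).left_comm]
    exact IsConj.refl _
  | @rotate a b s ha =>
    have hcomm : Commute (g s) (a.map g).prod :=
      Commute.list_prod_right _ _ (by simpa using fun t ht => hg s t (ha t ht))
    have hpull : ((a ++ s :: b).map g).prod = g s * ((a ++ b).map g).prod := by
      simp only [List.map_append, List.map_cons, List.prod_append, List.prod_cons, ← mul_assoc,
        hcomm.eq]
    rw [hpull, List.map_append (l₁ := a ++ b), List.prod_append, List.map_singleton,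
      List.prod_singleton]
    exact isConj_iff.2 ⟨(g s)⁻¹, by group⟩

theorem isConj_prod_of_reflTransGen (hg : ∀ x y, Distant x y → Commute (g x) (g y))
    {u v : List ℕ} (h : ReflTransGen Move u v) : IsConj (u.map g).prod (v.map g).prod := by
  induction h with
  | refl => exact IsConj.refl _
  | tail _ hmove ih => exact ih.trans (hmove.isConj_prod hg)

theorem isConj_prod_range'_of_perm (hg : ∀ x y, Distant x y → Commute (g x) (g y)) {m : ℕ}
    {u : List ℕ} (hu : u.Perm (List.range' 1 m)) :
    IsConj ((List.range' 1 m).map g).prod (u.map g).prod :=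
  (isConj_prod_of_reflTransGen hg (reflTransGen_move_range' hu)).symm

end Conjugacy

end CoxeterWord

open CoxeterWord

theorem commute_braidRels_of_add_two_le {m : ℕ} {i j : Fin m} (h : (i : ℕ) + 2 ≤ j) :
    Commute (PresentedGroup.of (rels := braidRels m) i) (PresentedGroup.of j) := by
  refine (map_mul (PresentedGroup.mk _) _ _).symm.trans ?_ |>.trans (map_mul _ _ _)
  exact PresentedGroup.mk_eq_mk_of_mul_inv_mem (Or.inl ⟨i, j, h, by group⟩)

theorem braidGen_commute (n : ℕ) {x y : ℕ} (h : Distant x y) :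
    Commute (braidGen n x) (braidGen n y) := by
  unfold Distant at h
  unfold braidGen
  split_ifs
  · rcases lt_trichotomy x y with hxy | rfl | hxy
    · exact commute_braidRels_of_add_two_le (by dsimp only; omega)
    · exact Commute.refl _
    · exact (commute_braidRels_of_add_two_le (by dsimp only; omega)).symm
  all_goals simp

theorem permutation_word_conjugate_to_standard_root_general (n : ℕ) (l : List ℕ)
    (hperm : l.Perm ((List.range (n - 1)).map (· + 1))) :
    IsConj (stdRoot n) (wordProd n l) := by
  have hrange : (List.range (n - 1)).map (· + 1) = List.range' 1 (n - 1) := by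
    simp [List.range'_eq_map_range, add_comm]
  rw [hrange] at hperm
  simpa only [stdRoot, wordProd, hrange] using
    isConj_prod_range'_of_perm (fun _ _ => braidGen_commute n) hperm

/-- For every `n ≥ 2` and every sequence `(i_1, …, i_{n-1})` that is a
permutation of `(1, …, n-1)`, the braid `σ_{i_1} σ_{i_2} ⋯ σ_{i_{n-1}}` is conjugate in
`B_n` to the standard root `δ_n = σ_1 σ_2 ⋯ σ_{n-1}`. -/
theorem permutation_word_conjugate_to_standard_root (n : ℕ) (hn : 2 ≤ n) (l : List ℕ)
    (hperm : l.Perm ((List.range (n - 1)).map (· + 1))) :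
    IsConj (stdRoot n) (wordProd n l) :=
  permutation_word_conjugate_to_standard_root_general n l hperm
end

section
/- Let n ≥ 2 and let (i_1, …, i_{n−1}) be any permutation of (1, …, n−1). Then there exists a subset S of {1, …, n−2} such that, in B_n, the braid σ_{i_1} σ_{i_2} ⋯ σ_{i_{n−1}} equals the normal-form braid of S. -/
/-!
Take `S = {i | σ_i occurs before σ_{i+1} in the word}`. Since `σ_i` and `σ_j` commute for
`|i - j| ≥ 2`, a word without repeated letters may be rearranged freely as long as every adjacent
pair `σ_i, σ_{i+1}` keeps its relative order. The normal-form word of `S` is such a rearrangement: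
in it `σ_i` precedes `σ_{i+1}` exactly when `i ∈ S`.
-/

open List

namespace List

variable {α : Type*}

theorem Pairwise.pair_sublist {R : α → α → Prop} {l : List α} {a b : α} (hl : l.Pairwise R)
    (ha : a ∈ l) (hb : b ∈ l) (hab : a ≠ b) (hba : ¬R b a) : [a, b] <+ l := by
  obtain ⟨l₁, l₂, rfl⟩ := append_of_mem ha
  rcases mem_append.mp hb with hb₁ | hb₂
  · exact absurd ((pairwise_append.mp hl).2.2 b hb₁ a mem_cons_self) hba
  · have hb₂ : b ∈ l₂ := (mem_cons.mp hb₂).resolve_left (Ne.symm hab)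
    exact (cons_sublist_cons.mpr (singleton_sublist.mpr hb₂)).trans (sublist_append_right _ _)

theorem Nodup.not_pair_sublist_swap {l : List α} {a b : α} (hl : l.Nodup) (hab : a ≠ b)
    (h : [a, b] <+ l) : ¬[b, a] <+ l := by
  induction l with
  | nil => cases h
  | cons c t ih =>
    have hct : c ∉ t := (nodup_cons.mp hl).1
    intro h'
    cases h with
    | cons _ h =>
      cases h' with
      | cons _ h' => exact ih hl.of_cons h h'
      | cons_cons _ h' => exact hct (h.subset (by simp))
    | cons_cons _ h =>
      cases h' with
      | cons _ h' => exact hct (h'.subset (by simp))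
      | cons_cons _ _ => exact hab rfl

variable {M : Type*} [Monoid M] (g : α → M)

theorem prod_map_middle_of_commute {xs ys : List α} {a : α}
    (h : ∀ b ∈ xs, Commute (g a) (g b)) :
    ((xs ++ a :: ys).map g).prod = g a * ((xs ++ ys).map g).prod := by
  simp only [map_append, map_cons, prod_append, prod_cons]
  exact (Commute.list_prod_right _ _ (by simpa using h)).symm.left_comm _

theorem Perm.prod_map_eq_of_pair_sublist {l l' : List α} (hp : l ~ l') (hnd : l'.Nodup)
    (h : ∀ a b, ¬Commute (g a) (g b) → [a, b] <+ l → [a, b] <+ l') :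
    (l.map g).prod = (l'.map g).prod := by
  induction l' generalizing l with
  | nil => rw [hp.eq_nil]
  | cons a t ih =>
    have hat : a ∉ t := (nodup_cons.mp hnd).1
    obtain ⟨xs, ys, rfl⟩ := append_of_mem (hp.mem_iff.mpr mem_cons_self)
    have haxy : a ∉ xs ++ ys := (nodup_cons.mp (nodup_middle.mp (hp.nodup_iff.mpr hnd))).1
    -- a letter in front of `a` in `l` comes after it in `l'`
    have hcomm : ∀ b ∈ xs, Commute (g a) (g b) := by
      intro b hb
      by_contra hab
      have hba : [b, a] <+ a :: t :=
        h b a (fun hc => hab hc.symm) (singleton_sublist.mpr hb |>.append (by simp))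
      cases hba with
      | cons _ hba => exact hat (hba.subset (by simp))
      | cons_cons _ => exact haxy (mem_append_left _ hb)
    have hdrop : ∀ c d, ¬Commute (g c) (g d) → [c, d] <+ xs ++ ys → [c, d] <+ t := by
      intro c d hcd hs
      have hca : c ≠ a := fun hca => haxy (hca ▸ hs.subset mem_cons_self)
      cases h c d hcd (hs.trans ((sublist_cons_self a ys).append_left xs)) with
      | cons _ hs' => exact hs'
      | cons_cons _ => exact absurd rfl hca
    rw [prod_map_middle_of_commute g hcomm, ih (perm_middle.symm.trans hp).cons_inv hnd.of_cons
      hdrop, map_cons, prod_cons]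

end List

theorem braidGen_commute_of_add_two_le {n a b : ℕ} (h : a + 2 ≤ b) :
    Commute (braidGen n a) (braidGen n b) := by
  unfold braidGen
  split_ifs with ha hb hb
  · set i : Fin (n - 1) := ⟨a - 1, by omega⟩
    set j : Fin (n - 1) := ⟨b - 1, by omega⟩
    have hrel : FreeGroup.of i * FreeGroup.of j * (FreeGroup.of i)⁻¹ * (FreeGroup.of j)⁻¹
        ∈ braidRels (n - 1) := Or.inl ⟨i, j, by simp only [i, j]; omega, rfl⟩
    have := PresentedGroup.one_of_mem hrel
    simp only [map_mul, map_inv, mul_inv_eq_iff_eq_mul, one_mul] at this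
    exact this
  all_goals simp

theorem eq_add_one_or_of_not_commute_braidGen {n a b : ℕ}
    (h : ¬Commute (braidGen n a) (braidGen n b)) : b = a + 1 ∨ a = b + 1 := by
  by_contra! hab
  rcases Nat.lt_trichotomy a b with hlt | rfl | hgt
  · exact h (braidGen_commute_of_add_two_le (by omega))
  · exact h (Commute.refl _)
  · exact h (braidGen_commute_of_add_two_le (by omega)).symm

theorem wordProd_eq_of_perm_of_adjacent_order {n : ℕ} {l l' : List ℕ} (hp : l ~ l')
    (hnd : l'.Nodup) (hasc : ∀ i, [i, i + 1] <+ l → [i, i + 1] <+ l')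
    (hdesc : ∀ i, [i + 1, i] <+ l → [i + 1, i] <+ l') :
    wordProd n l = wordProd n l' := by
  refine hp.prod_map_eq_of_pair_sublist _ hnd fun a b hab => ?_
  rcases eq_add_one_or_of_not_commute_braidGen hab with rfl | rfl
  exacts [hasc a, hdesc b]

theorem chainDesc_eq_reverse_range' (a b : ℕ) :
    chainDesc a b = (range' (a + 1) (b - a)).reverse := by
  rw [reverse_range', chainDesc]
  refine map_congr_left fun t ht => ?_
  rw [mem_range] at ht
  omega

theorem pairwise_gt_chainDesc (a b : ℕ) : (chainDesc a b).Pairwise (· > ·) := by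
  rw [chainDesc_eq_reverse_range', pairwise_reverse]
  exact pairwise_lt_range'

theorem mem_chainDesc {a b x : ℕ} : x ∈ chainDesc a b ↔ a < x ∧ x ≤ b := by
  rw [chainDesc_eq_reverse_range', mem_reverse, mem_range'_1]
  omega

theorem pair_sublist_chainDesc {a b i : ℕ} (hai : a < i) (hib : i < b) :
    [i + 1, i] <+ chainDesc a b :=
  (pairwise_gt_chainDesc a b).pair_sublist (mem_chainDesc.mpr ⟨by omega, hib⟩)
    (mem_chainDesc.mpr ⟨hai, hib.le⟩) (by omega) (by omega)

def descChains : ℕ → List ℕ → ℕ → List ℕ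
  | a, [], m => chainDesc a m
  | a, b :: s, m => chainDesc a b ++ descChains b s m

theorem normalWord_eq_descChains (n : ℕ) (S : Finset ℕ) :
    normalWord n S = descChains 0 (S.sort (· ≤ ·)) (n - 1) := by
  suffices ∀ s a, (((a :: (s ++ [n - 1])).zip (s ++ [n - 1])).map
      (fun p => chainDesc p.1 p.2)).flatten = descChains a s (n - 1) from this _ 0
  intro s
  induction s with
  | nil => simp [descChains]
  | cons b s ih => simp [descChains, ih]

section descChains

variable {a m : ℕ} {s : List ℕ}

theorem descChains_perm (hs : (a :: (s ++ [m])).Pairwise (· < ·)) :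
    descChains a s m ~ range' (a + 1) (m - a) := by
  induction s generalizing a with
  | nil =>
    rw [descChains, chainDesc_eq_reverse_range']
    exact reverse_perm _
  | cons b s ih =>
    have hab : a < b := rel_of_pairwise_cons hs (by simp)
    have hbm : b < m := rel_of_pairwise_cons hs.of_cons (by simp)
    rw [descChains, chainDesc_eq_reverse_range']
    refine ((reverse_perm _).append (ih hs.of_cons)).trans ?_
    rw [show m - a = (b - a) + (m - b) by omega, ← range'_append_1,
      show a + 1 + (b - a) = b + 1 by omega]

theorem mem_descChains {x : ℕ} (hs : (a :: (s ++ [m])).Pairwise (· < ·)) :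
    x ∈ descChains a s m ↔ a < x ∧ x ≤ m := by
  have ham : a < m := rel_of_pairwise_cons hs (by simp)
  rw [(descChains_perm hs).mem_iff, mem_range'_1]
  omega

theorem pair_sublist_descChains_of_mem {i : ℕ} (hs : (a :: (s ++ [m])).Pairwise (· < ·))
    (hi : i ∈ s) : [i, i + 1] <+ descChains a s m := by
  induction s generalizing a with
  | nil => cases hi
  | cons b s ih =>
    have hab : a < b := rel_of_pairwise_cons hs (by simp)
    have hbm : b < m := rel_of_pairwise_cons hs.of_cons (by simp)
    rw [descChains]
    rcases mem_cons.mp hi with rfl | hi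
    · refine (singleton_sublist.mpr ?_).append (singleton_sublist.mpr ?_)
      · exact mem_chainDesc.mpr ⟨hab, le_rfl⟩
      · exact (mem_descChains hs.of_cons).mpr ⟨by omega, by omega⟩
    · exact (ih hs.of_cons hi).trans (sublist_append_right _ _)

theorem pair_sublist_descChains_of_not_mem {i : ℕ} (hs : (a :: (s ++ [m])).Pairwise (· < ·))
    (hi : i ∉ s) (hai : a < i) (him : i < m) : [i + 1, i] <+ descChains a s m := by
  induction s generalizing a with
  | nil => exact pair_sublist_chainDesc hai him
  | cons b s ih =>
    rw [descChains]
    rcases Nat.lt_or_gt_of_ne (ne_of_not_mem_cons hi) with hib | hbi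
    · exact (pair_sublist_chainDesc hai hib).trans (sublist_append_left _ _)
    · exact (ih hs.of_cons (fun h => hi (mem_cons_of_mem b h)) hbi).trans
        (sublist_append_right _ _)

end descChains

section normalWord

variable {n : ℕ} {S : Finset ℕ}

theorem pairwise_normalWord_boundaries (hn : 2 ≤ n) (hS : S ⊆ Finset.Icc 1 (n - 2)) :
    (0 :: (S.sort (· ≤ ·) ++ [n - 1])).Pairwise (· < ·) := by
  have hmem : ∀ x ∈ S.sort (· ≤ ·), 1 ≤ x ∧ x ≤ n - 2 := fun x hx =>
    Finset.mem_Icc.mp (hS ((Finset.mem_sort _).mp hx))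
  refine pairwise_cons.mpr ⟨?_, pairwise_append.mpr ⟨(Finset.sortedLT_sort S).pairwise,
    pairwise_singleton _ _, ?_⟩⟩
  · simp only [mem_append, mem_singleton]
    rintro x (hx | rfl)
    · exact (hmem x hx).1
    · omega
  · simp only [mem_singleton]
    rintro x hx _ rfl
    have := hmem x hx
    omega

theorem normalWord_perm (hn : 2 ≤ n) (hS : S ⊆ Finset.Icc 1 (n - 2)) :
    normalWord n S ~ range' 1 (n - 1) := by
  rw [normalWord_eq_descChains]
  simpa using descChains_perm (pairwise_normalWord_boundaries hn hS)

theorem pair_sublist_normalWord_of_mem (hn : 2 ≤ n) (hS : S ⊆ Finset.Icc 1 (n - 2)) {i : ℕ}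
    (hi : i ∈ S) : [i, i + 1] <+ normalWord n S := by
  rw [normalWord_eq_descChains]
  exact pair_sublist_descChains_of_mem (pairwise_normalWord_boundaries hn hS)
    ((Finset.mem_sort _).mpr hi)

theorem pair_sublist_normalWord_of_not_mem (hn : 2 ≤ n) (hS : S ⊆ Finset.Icc 1 (n - 2))
    {i : ℕ} (hi : i ∉ S) (hi₁ : 1 ≤ i) (hin : i + 2 ≤ n) :
    [i + 1, i] <+ normalWord n S := by
  rw [normalWord_eq_descChains]
  exact pair_sublist_descChains_of_not_mem (pairwise_normalWord_boundaries hn hS)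
    (mt (Finset.mem_sort _).mp hi) hi₁ (by omega)

end normalWord

/-- For `n ≥ 2` and any permutation `(i_1, …, i_{n-1})` of `(1, …, n-1)`,
there is a subset `S ⊆ {1, …, n-2}` such that `σ_{i_1} σ_{i_2} ⋯ σ_{i_{n-1}}` equals the
normal-form braid of `S` in `B_n`. -/
theorem permutation_word_eq_normal_form (n : ℕ) (hn : 2 ≤ n) (l : List ℕ)
    (hperm : l.Perm ((List.range (n - 1)).map (· + 1))) :
    ∃ S : Finset ℕ, S ⊆ Finset.Icc 1 (n - 2) ∧ wordProd n l = normalBraid n S := by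
  classical
  have hl : l ~ range' 1 (n - 1) := by
    rwa [range'_eq_map_range, show (1 + ·) = (· + 1) from funext (Nat.add_comm 1)]
  have hl_nodup : l.Nodup := hl.nodup_iff.mpr nodup_range'
  have hbound {i j : ℕ} (h : [i, j] <+ l) : 1 ≤ i ∧ i < n ∧ 1 ≤ j ∧ j < n := by
    have := mem_range'_1.mp (hl.subset (h.subset mem_cons_self))
    have := mem_range'_1.mp (hl.subset (h.subset (by simp : j ∈ [i, j])))
    omega
  set S := (Finset.Icc 1 (n - 2)).filter fun i => [i, i + 1] <+ l
  have hS : S ⊆ Finset.Icc 1 (n - 2) := Finset.filter_subset _ _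
  have hnormal := normalWord_perm hn hS
  refine ⟨S, hS, wordProd_eq_of_perm_of_adjacent_order (hl.trans hnormal.symm)
    (hnormal.nodup_iff.mpr nodup_range') (fun i hi => ?_) (fun i hi => ?_)⟩
  · have := hbound hi
    exact pair_sublist_normalWord_of_mem hn hS
      (Finset.mem_filter.mpr ⟨Finset.mem_Icc.mpr ⟨by omega, by omega⟩, hi⟩)
  · have := hbound hi
    refine pair_sublist_normalWord_of_not_mem hn hS (fun hiS => ?_) (by omega) (by omega)
    exact hl_nodup.not_pair_sublist_swap (by omega) (Finset.mem_filter.mp hiS).2 hi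
end

section
/- Let n ≥ 2. For any two distinct subsets S ≠ S' of {1, …, n−2}, the images under π of the normal-form braids of S and of S' are distinct permutations in S_n; in particular, the normal-form braids of S and S' are distinct elements of B_n. Consequently, the map from subsets of {1, …, n−2} to B_n sending S to its normal-form braid is injective, and its image has exactly 2^{n−2} elements. -/
open Equiv

section AdjacentTranspositions

variable {n : ℕ}

/-- The image of `σ_i` in `S_n`, acting on `Fin n` (0-based) by swapping `i - 1` and `i`;
like `braidGen`, it is the identity for `i` out of range. -/
def adjSwap (n i : ℕ) : Perm (Fin n) :=
  if h : 1 ≤ i ∧ i ≤ n - 1 then swap ⟨i - 1, by omega⟩ ⟨i, by omega⟩ else 1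

def wordPerm (n : ℕ) (l : List ℕ) : Perm (Fin n) := (l.map (adjSwap n)).prod

@[simp]
lemma wordPerm_nil : wordPerm n [] = 1 := rfl

@[simp]
lemma wordPerm_cons (i : ℕ) (l : List ℕ) :
    wordPerm n (i :: l) = adjSwap n i * wordPerm n l := by
  simp [wordPerm]

lemma wordPerm_append (l₁ l₂ : List ℕ) :
    wordPerm n (l₁ ++ l₂) = wordPerm n l₁ * wordPerm n l₂ := by
  simp [wordPerm]

lemma adjSwap_succ {k : ℕ} (hk : k + 1 < n) :
    adjSwap n (k + 1) = swap ⟨k, by omega⟩ ⟨k + 1, hk⟩ := by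
  rw [adjSwap, dif_pos (by omega)]
  rfl

lemma adjSwap_commute {i j : ℕ} (hij : i + 2 ≤ j) (hj : j + 1 < n) :
    Commute (adjSwap n (i + 1)) (adjSwap n (j + 1)) := by
  rw [adjSwap_succ (by omega), adjSwap_succ hj]
  exact (Perm.disjoint_swap_swap (by simp [Fin.ext_iff]; omega)).commute

lemma adjSwap_braid {i : ℕ} (hi : i + 2 < n) :
    adjSwap n (i + 1) * adjSwap n (i + 2) * adjSwap n (i + 1) =
      adjSwap n (i + 2) * adjSwap n (i + 1) * adjSwap n (i + 2) := by
  rw [adjSwap_succ (by omega), adjSwap_succ hi]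
  set A : Fin n := ⟨i, by omega⟩
  set B : Fin n := ⟨i + 1, by omega⟩
  set D : Fin n := ⟨i + 2, hi⟩
  have hAB : A ≠ B := by simp [A, B, Fin.ext_iff]
  have hAD : A ≠ D := by simp [A, D, Fin.ext_iff]
  have hDB : D ≠ B := by simp [B, D, Fin.ext_iff]
  -- both sides are the transposition `(A D)`
  rw [swap_mul_swap_mul_swap hAB hAD, swap_comm A B, swap_comm B D,
    swap_mul_swap_mul_swap hDB hAD.symm, swap_comm]

end AdjacentTranspositions

section BraidGroupToPerm

variable {n : ℕ}

lemma lift_adjSwap_braidRels :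
    ∀ r ∈ braidRels (n - 1), FreeGroup.lift (fun k : Fin (n - 1) => adjSwap n (k + 1)) r = 1 := by
  rintro r (⟨i, j, hij, rfl⟩ | ⟨i, j, hij, rfl⟩) <;> have := j.isLt
  · simp only [map_mul, map_inv, FreeGroup.lift_apply_of]
    rw [(adjSwap_commute (n := n) hij (by omega)).eq]
    group
  · simp only [map_mul, map_inv, FreeGroup.lift_apply_of, hij]
    rw [mul_inv_eq_one]
    exact adjSwap_braid (n := n) (i := i) (by omega)

noncomputable def braidPerm (n : ℕ) : BraidGroup n →* Perm (Fin n) :=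
  PresentedGroup.toGroup lift_adjSwap_braidRels

lemma braidPerm_of (k : Fin (n - 1)) : braidPerm n (PresentedGroup.of k) = adjSwap n (k + 1) :=
  PresentedGroup.toGroup.of _

variable {π : BraidGroup n →* Perm (Fin n)}

lemma map_braidGen (hπ : ∀ k : Fin (n - 1), π (PresentedGroup.of k) = adjSwap n (k + 1))
    (i : ℕ) : π (braidGen n i) = adjSwap n i := by
  unfold braidGen
  split_ifs with hi
  · rw [hπ]
    congr 1
    change i - 1 + 1 = i
    omega
  · rw [map_one, adjSwap, dif_neg hi]

lemma map_wordProd (hπ : ∀ k : Fin (n - 1), π (PresentedGroup.of k) = adjSwap n (k + 1))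
    (l : List ℕ) : π (wordProd n l) = wordPerm n l := by
  simp only [wordProd, wordPerm, map_list_prod, List.map_map]
  congr 1
  exact List.map_congr_left fun i _ => map_braidGen hπ i

end BraidGroupToPerm

section NormalForm

variable {n : ℕ}

lemma chainDesc_self (a : ℕ) : chainDesc a a = [] := by
  simp [chainDesc]

lemma chainDesc_succ {a b : ℕ} (h : a ≤ b) : chainDesc a (b + 1) = (b + 1) :: chainDesc a b := by
  rw [chainDesc, show b + 1 - a = b - a + 1 by omega, List.range_succ_eq_map]
  simp only [List.map_cons, Nat.sub_zero, List.map_map, chainDesc]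
  congr 1
  exact List.map_congr_left fun t ht => by
    have := List.mem_range.mp ht
    simp only [Function.comp_apply]
    omega

lemma wordPerm_chainDesc_apply {a b : ℕ} (hab : a ≤ b) (hb : b < n) (x : Fin n) :
    (wordPerm n (chainDesc a b) x : ℕ) =
      if (x : ℕ) = a ∧ a < b then b else if a < x ∧ x ≤ b then x - 1 else x := by
  induction b, hab using Nat.le_induction with
  | base =>
    rw [chainDesc_self]
    split_ifs <;> simp <;> omega
  | succ b hab ih =>
    have ih := ih (by omega)
    rw [chainDesc_succ hab, wordPerm_cons, Perm.mul_apply, adjSwap_succ hb, swap_apply_def]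
    split_ifs at ih ⊢ <;> simp_all [Fin.ext_iff] <;> omega

def blockWord (bs : List ℕ) : List ℕ :=
  ((bs.zip bs.tail).map fun p => chainDesc p.1 p.2).flatten

lemma blockWord_pair (a b : ℕ) : blockWord [a, b] = chainDesc a b := by
  simp [blockWord]

lemma wordPerm_blockWord_cons_cons_apply (a c : ℕ) (t : List ℕ) (x : Fin n) :
    wordPerm n (blockWord (a :: c :: t)) x =
      wordPerm n (chainDesc a c) (wordPerm n (blockWord (c :: t)) x) := by
  simp [blockWord, wordPerm_append]

lemma normalWord_eq_blockWord (n : ℕ) (S : Finset ℕ) :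
    normalWord n S = blockWord (0 :: (S.sort (· ≤ ·) ++ [n - 1])) :=
  rfl

end NormalForm

section Blocks

variable {n a b : ℕ} {l : List ℕ}

lemma wordPerm_blockWord_apply_of_lt (hl : (a :: (l ++ [b])).Pairwise (· < ·)) (hb : b < n)
    {x : Fin n} (hx : (x : ℕ) < a) : wordPerm n (blockWord (a :: (l ++ [b]))) x = x := by
  induction l generalizing a with
  | nil =>
    have hab : a < b := List.rel_of_pairwise_cons hl (by simp)
    rw [List.nil_append, blockWord_pair, Fin.ext_iff, wordPerm_chainDesc_apply hab.le hb]
    split_ifs <;> omega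
  | cons c l ih =>
    have hac : a < c := List.rel_of_pairwise_cons hl (by simp)
    have hcb : c < b := List.rel_of_pairwise_cons hl.of_cons (by simp)
    rw [List.cons_append, wordPerm_blockWord_cons_cons_apply, ih hl.of_cons (by omega),
      Fin.ext_iff, wordPerm_chainDesc_apply hac.le (by omega)]
    split_ifs <;> omega

lemma lt_wordPerm_blockWord_apply (hl : (a :: (l ++ [b])).Pairwise (· < ·)) (hb : b < n)
    {x : Fin n} (hx : (x : ℕ) = a ∨ (x : ℕ) ∈ l) :
    (x : ℕ) < wordPerm n (blockWord (a :: (l ++ [b]))) x := by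
  induction l generalizing a with
  | nil =>
    have hab : a < b := List.rel_of_pairwise_cons hl (by simp)
    have hxa : (x : ℕ) = a := by simpa using hx
    rw [List.nil_append, blockWord_pair, wordPerm_chainDesc_apply hab.le hb]
    split_ifs <;> omega
  | cons c l ih =>
    have hac : a < c := List.rel_of_pairwise_cons hl (by simp)
    have hcb : c < b := List.rel_of_pairwise_cons hl.of_cons (by simp)
    rw [List.cons_append, wordPerm_blockWord_cons_cons_apply]
    rcases hx with hxa | hxl
    · rw [wordPerm_blockWord_apply_of_lt hl.of_cons hb (by omega),
        wordPerm_chainDesc_apply hac.le (by omega)]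
      split_ifs <;> omega
    · have hxl : (x : ℕ) = c ∨ (x : ℕ) ∈ l := List.mem_cons.mp hxl
      have hcx : c ≤ x := hxl.elim ge_of_eq
        fun h => (List.rel_of_pairwise_cons hl.of_cons (by simp [h])).le
      have := ih hl.of_cons hxl
      rw [wordPerm_chainDesc_apply hac.le (by omega)]
      split_ifs <;> omega

lemma wordPerm_blockWord_apply_lt (hl : (a :: (l ++ [b])).Pairwise (· < ·)) (hb : b < n)
    {x : Fin n} (hax : a < x) (hxb : x ≤ b) (hxl : (x : ℕ) ∉ l) :
    (wordPerm n (blockWord (a :: (l ++ [b]))) x : ℕ) < x := by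
  induction l generalizing a with
  | nil =>
    rw [List.nil_append, blockWord_pair, wordPerm_chainDesc_apply (by omega) hb]
    split_ifs <;> omega
  | cons c l ih =>
    have hac : a < c := List.rel_of_pairwise_cons hl (by simp)
    have hcb : c < b := List.rel_of_pairwise_cons hl.of_cons (by simp)
    obtain ⟨hxc, hxl⟩ : (x : ℕ) ≠ c ∧ (x : ℕ) ∉ l := by simpa using hxl
    rw [List.cons_append, wordPerm_blockWord_cons_cons_apply]
    rcases lt_or_gt_of_ne hxc with hxc | hxc
    · rw [wordPerm_blockWord_apply_of_lt hl.of_cons hb hxc,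
        wordPerm_chainDesc_apply hac.le (by omega)]
      split_ifs <;> omega
    · have := ih hl.of_cons hxc hxl
      rw [wordPerm_chainDesc_apply hac.le (by omega)]
      split_ifs <;> omega

end Blocks

section Injectivity

variable {n : ℕ} {S S' : Finset ℕ}

lemma normalWord_endpoints_pairwise_lt (hS : S ⊆ Finset.Icc 1 (n - 2)) (hn : 2 ≤ n) :
    (0 :: (S.sort (· ≤ ·) ++ [n - 1])).Pairwise (· < ·) := by
  have hmem : ∀ c ∈ S.sort (· ≤ ·), 0 < c ∧ c < n - 1 := fun c hc => by
    have := Finset.mem_Icc.mp (hS ((Finset.mem_sort _).mp hc))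
    omega
  simp only [List.pairwise_cons, List.pairwise_append, List.mem_append, List.mem_singleton,
    List.not_mem_nil]
  refine ⟨fun c hc => ?_, (Finset.sortedLT_sort S).pairwise, ?_, fun c hc _ h => h ▸ (hmem c hc).2⟩
  · rcases hc with hc | rfl
    exacts [(hmem c hc).1, by omega]
  · simp

lemma mem_iff_lt_wordPerm_normalWord (hS : S ⊆ Finset.Icc 1 (n - 2)) (x : Fin n)
    (hx : (x : ℕ) ∈ Finset.Icc 1 (n - 2)) :
    (x : ℕ) ∈ S ↔ (x : ℕ) < wordPerm n (normalWord n S) x := by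
  rw [Finset.mem_Icc] at hx
  have hl := normalWord_endpoints_pairwise_lt hS (by omega)
  rw [normalWord_eq_blockWord]
  refine ⟨fun hxS => ?_, fun hlt => by_contra fun hxS => ?_⟩
  · exact lt_wordPerm_blockWord_apply hl (by omega) (.inr ((Finset.mem_sort _).mpr hxS))
  · have := wordPerm_blockWord_apply_lt hl (by omega) (x := x) (by omega) (by omega)
      (fun h => hxS ((Finset.mem_sort _).mp h))
    omega

lemma eq_of_wordPerm_normalWord_eq (hS : S ⊆ Finset.Icc 1 (n - 2))
    (hS' : S' ⊆ Finset.Icc 1 (n - 2))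
    (h : wordPerm n (normalWord n S) = wordPerm n (normalWord n S')) : S = S' := by
  ext j
  by_cases hj : j ∈ Finset.Icc 1 (n - 2)
  · have hjn : j < n := by rw [Finset.mem_Icc] at hj; omega
    rw [mem_iff_lt_wordPerm_normalWord hS ⟨j, hjn⟩ hj,
      mem_iff_lt_wordPerm_normalWord hS' ⟨j, hjn⟩ hj, h]
  · exact iff_of_false (fun h => hj (hS h)) (fun h => hj (hS' h))

lemma injOn_normalBraid :
    Set.InjOn (normalBraid n) ↑(Finset.Icc 1 (n - 2)).powerset := fun S hS S' hS' h =>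
  eq_of_wordPerm_normalWord_eq (Finset.mem_powerset.mp hS) (Finset.mem_powerset.mp hS') <| by
    rw [← map_wordProd braidPerm_of, ← map_wordProd braidPerm_of]
    exact congrArg (braidPerm n) h

end Injectivity

/-- For `n ≥ 2`: under any homomorphism `π : B_n → S_n` sending each
generator `σ_{k+1}` to the adjacent transposition `(k+1, k+2)` (0-based: swapping `k` and
`k+1` in `Fin n`), distinct subsets `S ≠ S'` of `{1, …, n-2}` have normal-form braids with
distinct images in `S_n`; in particular the normal-form braids themselves are distinct, the
map `S ↦ normal-form braid of S` is injective, and its image has exactly `2^(n-2)`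
elements. -/
theorem normal_form_braids_distinct (n : ℕ) :
    (∀ π : BraidGroup n →* Equiv.Perm (Fin n),
      (∀ k : Fin (n - 1), π (PresentedGroup.of k) =
        Equiv.swap (⟨(k : ℕ), by have := k.isLt; omega⟩ : Fin n)
          (⟨(k : ℕ) + 1, by have := k.isLt; omega⟩ : Fin n)) →
      ∀ S S' : Finset ℕ, S ⊆ Finset.Icc 1 (n - 2) → S' ⊆ Finset.Icc 1 (n - 2) → S ≠ S' →
        π (normalBraid n S) ≠ π (normalBraid n S')) ∧
    (∀ S S' : Finset ℕ, S ⊆ Finset.Icc 1 (n - 2) → S' ⊆ Finset.Icc 1 (n - 2) → S ≠ S' →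
      normalBraid n S ≠ normalBraid n S') ∧
    {β : BraidGroup n | ∃ S : Finset ℕ, S ⊆ Finset.Icc 1 (n - 2) ∧ β = normalBraid n S}.ncard
      = 2 ^ (n - 2) := by
  refine ⟨fun π hπ S S' hS hS' hne h => hne ?_, fun S S' hS hS' hne h => hne ?_, ?_⟩
  · have hπ' : ∀ k : Fin (n - 1), π (PresentedGroup.of k) = adjSwap n (k + 1) :=
      fun k => (hπ k).trans (adjSwap_succ (by omega)).symm
    rw [normalBraid, normalBraid, map_wordProd hπ', map_wordProd hπ'] at h
    exact eq_of_wordPerm_normalWord_eq hS hS' h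
  · exact injOn_normalBraid (Finset.mem_powerset.mpr hS) (Finset.mem_powerset.mpr hS') h
  · have himage :
        {β : BraidGroup n | ∃ S : Finset ℕ, S ⊆ Finset.Icc 1 (n - 2) ∧ β = normalBraid n S} =
          normalBraid n '' ↑(Finset.Icc 1 (n - 2)).powerset := by
      ext β
      simp only [Set.mem_ofPred_eq, Set.mem_image, Finset.mem_coe, Finset.mem_powerset, eq_comm]
    rw [himage, injOn_normalBraid.ncard_image, Set.ncard_coe_finset, Finset.card_powerset,
      Nat.card_Icc, Nat.add_sub_cancel]
end

section
/- Let p, q, r be positive integers with gcd(p,q) < r ≤ p + q. Then there exist positive integers n and m with n < r, m < r, and n + m ≥ r, such that the pair (n, m) is reachable from (p, q) by finitely many Euclidean subtraction steps, where a single step replaces a pair (a, b) with a > b by (a − b, b), or a pair (a, b) with b > a by (a, b − a). In particular, gcd(n, m) = gcd(p, q). -/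
/-- A single Euclidean subtraction step on a pair of positive integers:
`(a, b) → (a - b, b)` if `a > b`, and `(a, b) → (a, b - a)` if `b > a`. -/
def EuclidStep (p q : ℕ × ℕ) : Prop :=
  (p.2 < p.1 ∧ q = (p.1 - p.2, p.2)) ∨ (p.1 < p.2 ∧ q = (p.1, p.2 - p.1))

/-!
Subtracting the smaller entry from the larger one preserves the gcd and leaves the larger
entry as the new sum, so the invariant `gcd a b < r ≤ a + b` survives every step taken while
`r ≤ max a b`. Such a step always exists (the invariant rules out `a = b`) and strictly lowers
`a + b`, so the descent ends at a pair whose entries are both below `r`. Positivity of the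
entries follows from the invariant, since `gcd 0 b = b`.
-/

theorem EuclidStep.gcd_eq {x y : ℕ × ℕ} (h : EuclidStep x y) :
    Nat.gcd y.1 y.2 = Nat.gcd x.1 x.2 := by
  rcases h with ⟨hlt, rfl⟩ | ⟨hlt, rfl⟩
  · exact Nat.gcd_sub_self_left hlt.le
  · exact Nat.gcd_sub_self_right hlt.le

theorem EuclidStep.gcd_eq_of_reflTransGen {x y : ℕ × ℕ}
    (h : Relation.ReflTransGen EuclidStep x y) : Nat.gcd y.1 y.2 = Nat.gcd x.1 x.2 := by
  induction h with
  | refl => rfl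
  | tail _ hstep ih => exact hstep.gcd_eq.trans ih

theorem Nat.pos_and_pos_of_gcd_lt_of_le_add {a b r : ℕ} (hgcd : Nat.gcd a b < r)
    (hsum : r ≤ a + b) : 0 < a ∧ 0 < b := by
  constructor <;>
    (apply Nat.pos_of_ne_zero; rintro rfl
     simp only [Nat.gcd_zero_left, Nat.gcd_zero_right] at hgcd; omega)

theorem EuclidStep.exists_of_gcd_lt_of_le_max {a b r : ℕ} (hgcd : Nat.gcd a b < r)
    (hmax : r ≤ max a b) : ∃ y, EuclidStep (a, b) y ∧ r ≤ y.1 + y.2 ∧ y.1 + y.2 < a + b := by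
  obtain ⟨ha, hb⟩ := Nat.pos_and_pos_of_gcd_lt_of_le_add hgcd (by omega)
  rcases lt_trichotomy a b with hab | rfl | hab
  · exact ⟨(a, b - a), Or.inr ⟨hab, rfl⟩, by dsimp only; omega, by dsimp only; omega⟩
  · simp only [Nat.gcd_self, max_self] at hgcd hmax; omega
  · exact ⟨(a - b, b), Or.inl ⟨hab, rfl⟩, by dsimp only; omega, by dsimp only; omega⟩

theorem EuclidStep.exists_reflTransGen_lt {a b r : ℕ} (hgcd : Nat.gcd a b < r)
    (hsum : r ≤ a + b) : ∃ n m, n < r ∧ m < r ∧ r ≤ n + m ∧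
      Relation.ReflTransGen EuclidStep (a, b) (n, m) := by
  induction hs : a + b using Nat.strong_induction_on generalizing a b with
  | _ s ih =>
    by_cases hmax : max a b < r
    · obtain ⟨ha, hb⟩ := max_lt_iff.mp hmax
      exact ⟨a, b, ha, hb, hsum, .refl⟩
    obtain ⟨⟨c, d⟩, hstep, hcd, hlt⟩ := exists_of_gcd_lt_of_le_max hgcd (not_lt.mp hmax)
    obtain ⟨n, m, hn, hm, hnm, hreach⟩ :=
      ih (c + d) (hs ▸ hlt) (hstep.gcd_eq ▸ hgcd) hcd rfl
    exact ⟨n, m, hn, hm, hnm, .head hstep hreach⟩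

theorem euclid_reduction_exists_general (p q r : ℕ)
    (hgcd : Nat.gcd p q < r) (hsum : r ≤ p + q) :
    ∃ n m : ℕ, 0 < n ∧ 0 < m ∧ n < r ∧ m < r ∧ r ≤ n + m ∧
      Relation.ReflTransGen EuclidStep (p, q) (n, m) ∧
      Nat.gcd n m = Nat.gcd p q := by
  obtain ⟨n, m, hn, hm, hnm, hreach⟩ := EuclidStep.exists_reflTransGen_lt hgcd hsum
  have hgcd_nm : Nat.gcd n m = Nat.gcd p q := EuclidStep.gcd_eq_of_reflTransGen hreach
  obtain ⟨hn_pos, hm_pos⟩ := Nat.pos_and_pos_of_gcd_lt_of_le_add (hgcd_nm ▸ hgcd) hnm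
  exact ⟨n, m, hn_pos, hm_pos, hn, hm, hnm, hreach, hgcd_nm⟩

/-- Let `p, q, r` be positive integers with `gcd(p,q) < r ≤ p + q`.
Then there exist positive integers `n, m` with `n < r`, `m < r`, `n + m ≥ r`, such that
`(n, m)` is reachable from `(p, q)` by finitely many Euclidean subtraction steps.
In particular, `gcd(n, m) = gcd(p, q)`. -/
theorem euclid_reduction_exists (p q r : ℕ) (hp : 0 < p) (hq : 0 < q) (hr : 0 < r)
    (hgcd : Nat.gcd p q < r) (hsum : r ≤ p + q) :
    ∃ n m : ℕ, 0 < n ∧ 0 < m ∧ n < r ∧ m < r ∧ r ≤ n + m ∧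
      Relation.ReflTransGen EuclidStep (p, q) (n, m) ∧
      Nat.gcd n m = Nat.gcd p q :=
  euclid_reduction_exists_general p q r hgcd hsum
end
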